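/- Party-permutation-invariant tetrahedral bases for odd n: let n ≥ 1 be odd and let θ_k, α_k ∈ ℝ for k = 0,…,(n−1)/2. Define ψ = 2^{−(n−1)/2} Σ_{k=0}^{(n−1)/2} e^{iα_k}(cos θ_k · D_k + i·sin θ_k · D_{n−k}). Then ψ is a unit vector, invariant under all permutations of the n tensor factors, and its orbit {U_g ψ : g ∈ {0,1}ⁿ} under G_tetra^{(n)} is an orthonormal basis of (ℂ²)^{⊗n}. -/
import Mathlib


open Matrix Complex Finset

/-- Pauli X. -/
noncomputable def X2 : Matrix (Fin 2) (Fin 2) ℂ := !![0, 1; 1, 0]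

/-- Pauli Y. -/
noncomputable def Y2 : Matrix (Fin 2) (Fin 2) ℂ := !![0, -Complex.I; Complex.I, 0]

/-- Pauli Z. -/
noncomputable def Z2 : Matrix (Fin 2) (Fin 2) ℂ := !![1, 0; 0, -1]

/-- Tensor product of single-qubit operators, as a matrix on (ℂ²)^{⊗n}. -/
noncomputable def tensorOp2 {n : ℕ} (A : Fin n → Matrix (Fin 2) (Fin 2) ℂ) :
    Matrix (Fin n → Fin 2) (Fin n → Fin 2) ℂ :=
  Matrix.of fun v w => ∏ i, A i (v i) (w i)

/-- Single-site operator A acting on qubit i (identity elsewhere). -/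
noncomputable def single2 {n : ℕ} (i : Fin n) (A : Matrix (Fin 2) (Fin 2) ℂ) :
    Matrix (Fin n → Fin 2) (Fin n → Fin 2) ℂ :=
  tensorOp2 fun j => if j = i then A else 1

/-- The inner product ⟨f, g⟩ = Σ conj(f v) g v (antilinear in the first argument). -/
noncomputable def dotc {ι : Type*} [Fintype ι] (f g : ι → ℂ) : ℂ :=
  ∑ v, (starRingEnd ℂ) (f v) * g v

/-- The unitaries U_g of G_tetra^{(n)}, g = (z₁,…,z_{n−1},x) ∈ {0,1}ⁿ:
U_g = (Z^{(1)}Z^{(2)})^{z₁}···(Z^{(n−1)}Z^{(n)})^{z_{n−1}}·(X⊗⋯⊗X)^x. -/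
noncomputable def Ug2 (n : ℕ) [NeZero n] (g : Fin n → Fin 2) :
    Matrix (Fin n → Fin 2) (Fin n → Fin 2) ℂ :=
  (((List.finRange (n - 1)).map fun i =>
      (single2 (⟨i.val, by have := i.isLt; omega⟩ : Fin n) Z2 *
          single2 (⟨i.val + 1, by have := i.isLt; omega⟩ : Fin n) Z2)
        ^ (g ⟨i.val, by have := i.isLt; omega⟩).val).prod) *
    (tensorOp2 fun _ : Fin n => X2)
      ^ (g ⟨n - 1, by have := Nat.pos_of_ne_zero (NeZero.ne n); omega⟩).val
/-- The supernormalized Dicke state D_k = Σ_{wt(w)=k} |w⟩, as a function on basis labels. -/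
noncomputable def Dicke (n k : ℕ) : (Fin n → Fin 2) → ℂ :=
  fun w => if (∑ i, (w i).val) = k then 1 else 0


lemma fin2_add_one_one (a : Fin 2) : a + 1 + 1 = a := by fin_cases a <;> decide

lemma fin2_add_one_val (a : Fin 2) : (a + 1).val = 1 - a.val := by fin_cases a <;> decide

/-- flip all bits -/
def flipv {n : ℕ} (v : Fin n → Fin 2) : Fin n → Fin 2 := fun i => v i + 1

lemma flipv_invol {n : ℕ} : Function.Involutive (flipv (n := n)) := by
  intro v; funext i; simp [flipv, fin2_add_one_one]

def flipE {n : ℕ} : Equiv.Perm (Fin n → Fin 2) := flipv_invol.toPerm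

noncomputable def wt {n : ℕ} (v : Fin n → Fin 2) : ℕ := ∑ i, (v i).val

lemma wt_le {n : ℕ} (v : Fin n → Fin 2) : wt v ≤ n := by
  calc wt v ≤ ∑ _i : Fin n, 1 := Finset.sum_le_sum (fun i _ => by omega)
  _ = n := by simp

lemma wt_flipv {n : ℕ} (v : Fin n → Fin 2) : wt (flipv v) = n - wt v := by
  have h : wt (flipv v) + wt v = n := by
    rw [wt, wt, ← Finset.sum_add_distrib]
    have : ∀ i : Fin n, ((flipv v) i).val + (v i).val = 1 := by
      intro i; have := (v i).isLt; rw [flipv, fin2_add_one_val]; omega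
    simp [this]
  omega

lemma wt_comp_perm {n : ℕ} (v : Fin n → Fin 2) (σ : Equiv.Perm (Fin n)) :
    wt (v ∘ σ) = wt v := by
  unfold wt; exact Equiv.sum_comp σ (fun i => (v i).val)

/-- doubling trick -/
lemma sum_double {n : ℕ} (T : (Fin n → Fin 2) → ℂ) :
    2 * ∑ v, T v = ∑ v, (T v + T (flipv v)) := by
  have h : ∑ v, T (flipv v) = ∑ v, T v := Fintype.sum_equiv flipE _ _ (fun v => rfl)
  rw [Finset.sum_add_distrib, h, two_mul]

lemma Z2app (a b : Fin 2) : (!![1, 0; 0, -1] : Matrix (Fin 2) (Fin 2) ℂ) a b = if a = b then (-1:ℂ)^(a.val) else 0 := by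
  fin_cases a <;> fin_cases b <;> simp

lemma X2app (a b : Fin 2) : (!![0, 1; 1, 0] : Matrix (Fin 2) (Fin 2) ℂ) a b = if b = a + 1 then (1:ℂ) else 0 := by
  fin_cases a <;> fin_cases b <;> simp

noncomputable def single2' {n : ℕ} (i : Fin n) (A : Matrix (Fin 2) (Fin 2) ℂ) :
    Matrix (Fin n → Fin 2) (Fin n → Fin 2) ℂ :=
  Matrix.of fun v w => ∏ j, (if j = i then A else 1) (v j) (w j)

lemma single2'_Z (n : ℕ) (i : Fin n) :
    single2' i (!![1, 0; 0, -1] : Matrix (Fin 2) (Fin 2) ℂ)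
      = Matrix.diagonal (fun v => (-1:ℂ) ^ (v i).val) := by
  ext v w
  by_cases hvw : v = w
  · subst hvw
    rw [single2', Matrix.diagonal_apply_eq, Matrix.of_apply,
      Finset.prod_eq_single i (by
        intro j _ hj; simp [hj, Matrix.one_apply]) (by simp)]
    rw [if_pos rfl, Z2app]; simp
  · obtain ⟨j, hj⟩ := Function.ne_iff.mp hvw
    rw [single2', Matrix.diagonal_apply_ne _ hvw, Matrix.of_apply]
    apply Finset.prod_eq_zero (Finset.mem_univ j)
    by_cases hji : j = i
    · subst hji; rw [if_pos rfl, Z2app]; simp [hj]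
    · simp [hji, Matrix.one_apply, hj]

lemma tensorX_mulVec {n : ℕ} (f : (Fin n → Fin 2) → ℂ)
    (ψ : (Fin n → Fin 2) → ℂ) :
    (Matrix.of fun v w : Fin n → Fin 2 =>
      ∏ i, (!![0, 1; 1, 0] : Matrix (Fin 2) (Fin 2) ℂ) (v i) (w i)) *ᵥ ψ
      = fun v => ψ (fun i => v i + 1) := by
  funext v
  have h1 : ∀ w, (∏ i, (!![0, 1; 1, 0] : Matrix (Fin 2) (Fin 2) ℂ) (v i) (w i))
      = if w = (fun i => v i + 1) then (1:ℂ) else 0 := by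
    intro w
    have : ∀ i : Fin n, (!![0, 1; 1, 0] : Matrix (Fin 2) (Fin 2) ℂ) (v i) (w i)
        = if w i = v i + 1 then (1:ℂ) else 0 := fun i => X2app (v i) (w i)
    rw [Finset.prod_congr rfl (fun i _ => this i), Finset.prod_boole]
    congr 1
    simp [funext_iff]
  rw [Matrix.mulVec]
  show (∑ w, _) = _
  calc (∑ w, (Matrix.of fun v w : Fin n → Fin 2 =>
      ∏ i, (!![0, 1; 1, 0] : Matrix (Fin 2) (Fin 2) ℂ) (v i) (w i)) v w * ψ w)
      = ∑ w, (if w = (fun i => v i + 1) then (1:ℂ) else 0) * ψ w := by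
        refine Finset.sum_congr rfl fun w _ => ?_
        rw [Matrix.of_apply, h1 w]
    _ = ψ (fun i => v i + 1) := by
        rw [Finset.sum_eq_single (fun i => v i + 1)]
        · simp
        · intro w _ hw; simp [hw]
        · simp

lemma list_prod_diag {ι : Type*} {m : Type*} [Fintype m] [DecidableEq m]
    (l : List ι) (d : ι → m → ℂ) :
    (l.map fun i => Matrix.diagonal (d i)).prod
      = Matrix.diagonal (fun v => (l.map fun i => d i v).prod) := by
  induction l with
  | nil => simp [Matrix.diagonal_one]
  | cons a t ih =>
      simp only [List.map_cons, List.prod_cons, ih, Matrix.diagonal_mul_diagonal]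

noncomputable def Esgn (n : ℕ) (g v : Fin n → Fin 2) : ℂ :=
  ∏ i : Fin (n-1), (-1 : ℂ) ^
    (((v ⟨i.val, by have := i.isLt; omega⟩).val + (v ⟨i.val+1, by have := i.isLt; omega⟩).val) *
      (g ⟨i.val, by have := i.isLt; omega⟩).val)

lemma single2_eq {n : ℕ} (i : Fin n) (A : Matrix (Fin 2) (Fin 2) ℂ) :
    single2 i A = single2' i A := rfl

lemma Zelem {n : ℕ} (g : Fin n → Fin 2) (i : Fin (n-1)) :
    (single2 (⟨i.val, by have := i.isLt; omega⟩ : Fin n) Z2 *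
        single2 (⟨i.val + 1, by have := i.isLt; omega⟩ : Fin n) Z2)
      ^ (g ⟨i.val, by have := i.isLt; omega⟩).val
    = Matrix.diagonal (fun v => (-1 : ℂ) ^
        (((v ⟨i.val, by have := i.isLt; omega⟩).val + (v ⟨i.val+1, by have := i.isLt; omega⟩).val) *
          (g ⟨i.val, by have := i.isLt; omega⟩).val)) := by
  rw [single2_eq, single2_eq]
  show (single2' _ Z2 * single2' _ Z2) ^ _ = _
  rw [show Z2 = !![1, 0; 0, -1] from rfl, single2'_Z, single2'_Z,
    Matrix.diagonal_mul_diagonal, Matrix.diagonal_pow]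
  apply congrArg Matrix.diagonal
  funext v
  rw [Pi.pow_apply, ← pow_add, ← pow_mul]

lemma Zpart_eq {n : ℕ} [NeZero n] (g : Fin n → Fin 2) :
    (((List.finRange (n - 1)).map fun i =>
      (single2 (⟨i.val, by have := i.isLt; omega⟩ : Fin n) Z2 *
          single2 (⟨i.val + 1, by have := i.isLt; omega⟩ : Fin n) Z2)
        ^ (g ⟨i.val, by have := i.isLt; omega⟩).val).prod)
    = Matrix.diagonal (Esgn n g) := by
  simp only [Zelem]
  rw [list_prod_diag]
  apply congrArg Matrix.diagonal
  funext v
  rw [Esgn, Fin.prod_univ_def]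

lemma Ug2_mulVec (n : ℕ) [NeZero n] (g : Fin n → Fin 2) (ψ : (Fin n → Fin 2) → ℂ) :
    Ug2 n g *ᵥ ψ = fun v => Esgn n g v *
      (if g ⟨n - 1, by have := Nat.pos_of_ne_zero (NeZero.ne n); omega⟩ = 0
        then ψ v else ψ (flipv v)) := by
  rw [Ug2, ← Matrix.mulVec_mulVec, Zpart_eq]
  have hX : (tensorOp2 fun _ : Fin n => X2)
      ^ (g ⟨n - 1, by have := Nat.pos_of_ne_zero (NeZero.ne n); omega⟩).val *ᵥ ψ
      = (if g ⟨n - 1, by have := Nat.pos_of_ne_zero (NeZero.ne n); omega⟩ = 0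
        then ψ else fun v => ψ (flipv v)) := by
    by_cases hx : g ⟨n - 1, by have := Nat.pos_of_ne_zero (NeZero.ne n); omega⟩ = 0
    · rw [hx]; simp
    · have h1 : g ⟨n - 1, by have := Nat.pos_of_ne_zero (NeZero.ne n); omega⟩ = 1 := by
        have := (g ⟨n - 1, by have := Nat.pos_of_ne_zero (NeZero.ne n); omega⟩).isLt
        omega
      rw [if_neg hx, h1]; simp only [Fin.val_one, pow_one]
      show (Matrix.of fun v w : Fin n → Fin 2 =>
          ∏ i, (!![0, 1; 1, 0] : Matrix (Fin 2) (Fin 2) ℂ) (v i) (w i)) *ᵥ ψ = _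
      rw [tensorX_mulVec ψ ψ]
      rfl
  rw [hX]
  funext v
  by_cases hx : g ⟨n - 1, by have := Nat.pos_of_ne_zero (NeZero.ne n); omega⟩ = 0 <;>
    simp [hx, Matrix.mulVec_diagonal]


def lo {n : ℕ} (i : Fin (n-1)) : Fin n := ⟨i.val, by have := i.isLt; omega⟩
def hi2 {n : ℕ} (i : Fin (n-1)) : Fin n := ⟨i.val+1, by have := i.isLt; omega⟩

lemma Esgn_eq {n : ℕ} (g v : Fin n → Fin 2) :
    Esgn n g v = ∏ i : Fin (n-1),
      (-1 : ℂ) ^ (((v (lo i)).val + (v (hi2 i)).val) * (g (lo i)).val) := rfl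

lemma parity_pow {a b : ℕ} (h : a % 2 = b % 2) : (-1:ℂ)^a = (-1:ℂ)^b := by
  rw [neg_one_pow_eq_pow_mod_two, h, ← neg_one_pow_eq_pow_mod_two]

lemma Esgn_conj {n : ℕ} (g v : Fin n → Fin 2) :
    (starRingEnd ℂ) (Esgn n g v) = Esgn n g v := by
  rw [Esgn_eq, map_prod]
  refine Finset.prod_congr rfl fun i _ => ?_
  simp

lemma Esgn_mul_self {n : ℕ} (g v : Fin n → Fin 2) :
    Esgn n g v * Esgn n g v = 1 := by
  rw [Esgn_eq, ← Finset.prod_mul_distrib]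
  apply Finset.prod_eq_one
  intro i _
  rw [← pow_add]
  apply Even.neg_one_pow
  exact ⟨_, rfl⟩

lemma Esgn_flipv {n : ℕ} (g v : Fin n → Fin 2) :
    Esgn n g (flipv v) = Esgn n g v := by
  rw [Esgn_eq, Esgn_eq]
  refine Finset.prod_congr rfl fun i _ => ?_
  apply parity_pow
  have h1 := fin2_add_one_val (v (lo i))
  have h2 := fin2_add_one_val (v (hi2 i))
  have := (v (lo i)).isLt
  have := (v (hi2 i)).isLt
  show (((flipv v) (lo i)).val + ((flipv v) (hi2 i)).val) * _ % 2 = _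
  rw [show ((flipv v) (lo i)) = v (lo i) + 1 from rfl,
    show ((flipv v) (hi2 i)) = v (hi2 i) + 1 from rfl, h1, h2]
  have h3 : (1 - (v (lo i)).val + (1 - (v (hi2 i)).val)) % 2
      = ((v (lo i)).val + (v (hi2 i)).val) % 2 := by omega
  rw [Nat.mul_mod, Nat.mul_mod ((v (lo i)).val + (v (hi2 i)).val), h3]

lemma sum_zero_of_invol {n : ℕ} (T : (Fin n → Fin 2) → ℂ) (e : Equiv.Perm (Fin n → Fin 2))
    (h : ∀ v, T (e v) = - T v) : ∑ v, T v = 0 := by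
  have h2 : ∑ v, T (e v) = ∑ v, T v := Fintype.sum_equiv e _ _ (fun v => rfl)
  have h3 : ∑ v, T (e v) = - ∑ v, T v := by
    simp only [h, Finset.sum_neg_distrib]
  have h4 : ∑ v, T v = - ∑ v, T v := h2.symm.trans h3
  linear_combination h4 / 2

lemma upd_invol {n : ℕ} (p : Fin n) :
    Function.Involutive (fun v : Fin n → Fin 2 => Function.update v p (v p + 1)) := by
  intro v
  funext q
  by_cases hq : q = p
  · subst hq
    simp [Function.update_apply, fin2_add_one_one]
  · simp [Function.update_apply, hq]

lemma chi_upd {n : ℕ} (g h : Fin n → Fin 2) (j : Fin (n-1))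
    (hj : g (lo j) ≠ h (lo j))
    (hmin : ∀ i : Fin (n-1), i.val < j.val → g (lo i) = h (lo i))
    (v : Fin n → Fin 2) :
    Esgn n g (Function.update v (lo j) (v (lo j) + 1)) *
      Esgn n h (Function.update v (lo j) (v (lo j) + 1))
    = -(Esgn n g v * Esgn n h v) := by
  set p : Fin n := lo j with hp
  set v' : Fin n → Fin 2 := Function.update v p (v p + 1) with hv'
  -- combine into a single product
  have key : ∀ w : Fin n → Fin 2, Esgn n g w * Esgn n h w
      = ∏ i : Fin (n-1), (-1:ℂ) ^ (((w (lo i)).val + (w (hi2 i)).val) *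
          ((g (lo i)).val + (h (lo i)).val)) := by
    intro w
    rw [Esgn_eq, Esgn_eq, ← Finset.prod_mul_distrib]
    refine Finset.prod_congr rfl fun i _ => ?_
    rw [← pow_add, Nat.mul_add]
  rw [key, key]
  -- F' i * F i = if i = j then -1 else 1
  have hFF : ∀ i : Fin (n-1),
      ((-1:ℂ) ^ (((v' (lo i)).val + (v' (hi2 i)).val) * ((g (lo i)).val + (h (lo i)).val))) *
      ((-1:ℂ) ^ (((v (lo i)).val + (v (hi2 i)).val) * ((g (lo i)).val + (h (lo i)).val)))
      = if i = j then -1 else 1 := by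
    intro i
    rw [← pow_add]
    have hvp := fin2_add_one_val (v p)
    have b1 := (v (lo i)).isLt
    have b2 := (v (hi2 i)).isLt
    have b3 := (v p).isLt
    have bg := (g (lo i)).isLt
    have bh := (h (lo i)).isLt
    by_cases hij : i = j
    · subst hij
      -- lo i = p, hi2 i ≠ p
      have e1 : v' (lo i) = v p + 1 := by
        rw [hv', Function.update_apply, if_pos rfl]
      have e2 : v' (hi2 i) = v (hi2 i) := by
        rw [hv', Function.update_apply, if_neg]
        rw [hp]; simp only [hi2, lo, Fin.mk.injEq]; omega
      have hgh : (g (lo i)).val ≠ (h (lo i)).val := fun hc => hj (Fin.ext hc)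
      have hc1 : (g (lo i)).val + (h (lo i)).val = 1 := by omega
      rw [e1, e2, if_pos rfl, hvp, hc1, mul_one, mul_one]
      apply Odd.neg_one_pow
      rw [Nat.odd_iff]
      have hveq : (v (lo i)).val = (v p).val := by rw [hp]
      have := (v p).isLt
      omega
    · rw [if_neg hij]
      by_cases hi1 : i.val + 1 = j.val
      · -- coefficient even since g (lo i) = h (lo i)
        have hgh : g (lo i) = h (lo i) := hmin i (by omega)
        apply Even.neg_one_pow
        rw [Nat.even_add, hgh]
        simp [Nat.even_mul, Nat.even_add]
      · -- v' agrees with v at lo i and hi2 i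
        have hlo : lo i ≠ p := by
          intro hc
          have h5' : (lo i).val = p.val := congrArg Fin.val hc
          have h5 : i.val = j.val := h5'
          exact hij (Fin.ext h5)
        have hhi : hi2 i ≠ p := by
          intro hc
          have h5' : (hi2 i).val = p.val := congrArg Fin.val hc
          have h5 : i.val + 1 = j.val := h5'
          exact hi1 h5
        have e1 : v' (lo i) = v (lo i) := by rw [hv', Function.update_apply, if_neg hlo]
        have e2 : v' (hi2 i) = v (hi2 i) := by rw [hv', Function.update_apply, if_neg hhi]
        rw [e1, e2]
        apply Even.neg_one_pow
        exact ⟨_, rfl⟩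
  calc (∏ i : Fin (n-1), (-1:ℂ) ^ (((v' (lo i)).val + (v' (hi2 i)).val) *
          ((g (lo i)).val + (h (lo i)).val)))
      = (∏ i : Fin (n-1), ((-1:ℂ) ^ (((v' (lo i)).val + (v' (hi2 i)).val) *
          ((g (lo i)).val + (h (lo i)).val))) *
        ((-1:ℂ) ^ (((v (lo i)).val + (v (hi2 i)).val) *
          ((g (lo i)).val + (h (lo i)).val)))) *
        (∏ i : Fin (n-1), (-1:ℂ) ^ (((v (lo i)).val + (v (hi2 i)).val) *
          ((g (lo i)).val + (h (lo i)).val))) := by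
        rw [← Finset.prod_mul_distrib]
        refine Finset.prod_congr rfl fun i _ => ?_
        rw [mul_assoc, ← pow_add]
        have : ((-1:ℂ)) ^ ((((v (lo i)).val + (v (hi2 i)).val) *
            ((g (lo i)).val + (h (lo i)).val)) + (((v (lo i)).val + (v (hi2 i)).val) *
            ((g (lo i)).val + (h (lo i)).val))) = 1 := Even.neg_one_pow ⟨_, rfl⟩
        rw [this, mul_one]
    _ = -(∏ i : Fin (n-1), (-1:ℂ) ^ (((v (lo i)).val + (v (hi2 i)).val) *
          ((g (lo i)).val + (h (lo i)).val))) := by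
        rw [Finset.prod_congr rfl (fun i _ => hFF i),
          Finset.prod_eq_single j (fun b _ hb => if_neg hb) (by simp), if_pos rfl]
        ring

lemma chi_sum_zero {n : ℕ} (g h : Fin n → Fin 2)
    (hd : ∃ i : Fin (n-1), g (lo i) ≠ h (lo i)) :
    ∑ v : Fin n → Fin 2, Esgn n g v * Esgn n h v = 0 := by
  classical
  obtain ⟨i0, hi0⟩ := hd
  -- minimal such index
  let s : Finset (Fin (n-1)) := Finset.univ.filter (fun i => g (lo i) ≠ h (lo i))
  have hs : s.Nonempty := ⟨i0, by simp [s, hi0]⟩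
  set j := s.min' hs with hj
  have hjmem : j ∈ s := s.min'_mem hs
  have hjne : g (lo j) ≠ h (lo j) := by
    have := Finset.mem_filter.mp hjmem
    exact this.2
  have hmin : ∀ i : Fin (n-1), i.val < j.val → g (lo i) = h (lo i) := by
    intro i hi
    by_contra hc
    have : j ≤ i := s.min'_le i (by simp [s, hc])
    exact absurd hi (by omega)
  exact sum_zero_of_invol _ ((upd_invol (lo j)).toPerm)
    (fun v => chi_upd g h j hjne hmin v)

noncomputable def Fc (n : ℕ) (θ α : ℕ → ℝ) (m : ℕ) : ℂ :=
  if m ≤ (n-1)/2 then Complex.exp ((α m : ℝ) * Complex.I) * (Real.cos (θ m) : ℂ)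
  else Complex.exp ((α (n-m) : ℝ) * Complex.I) * (Complex.I * (Real.sin (θ (n-m)) : ℂ))

lemma conj_exp_mul (x : ℝ) :
    (starRingEnd ℂ) (Complex.exp ((x:ℝ) * Complex.I)) * Complex.exp ((x:ℝ) * Complex.I) = 1 := by
  rw [← Complex.exp_conj]
  rw [show (starRingEnd ℂ) ((x:ℂ) * Complex.I) = -((x:ℂ) * Complex.I) by
    simp [Complex.conj_ofReal]]
  rw [← Complex.exp_add]
  simp

lemma keyF (n : ℕ) (hn1 : 1 ≤ n) (hodd : n % 2 = 1) (θ α : ℕ → ℝ) (m : ℕ) (hm : m ≤ n) :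
    ∑ k ∈ Finset.range ((n - 1) / 2 + 1),
      Complex.exp ((α k : ℝ) * Complex.I) *
        ((Real.cos (θ k) : ℂ) * (if m = k then (1:ℂ) else 0) +
          Complex.I * (Real.sin (θ k) : ℂ) * (if m = n - k then (1:ℂ) else 0))
    = Fc n θ α m := by
  by_cases hc : m ≤ (n-1)/2
  · rw [Fc, if_pos hc, Finset.sum_eq_single m]
    · rw [if_pos rfl, if_neg (by omega)]
      ring
    · intro k hk hkm
      have hk' := Finset.mem_range.mp hk
      rw [if_neg (by omega), if_neg (by omega)]
      ring
    · intro hnm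
      exact absurd (Finset.mem_range.mpr (by omega)) hnm
  · rw [Fc, if_neg hc, Finset.sum_eq_single (n - m)]
    · rw [if_neg (by omega), if_pos (by omega)]
      ring
    · intro k hk hkm
      have hk' := Finset.mem_range.mp hk
      rw [if_neg (by omega), if_neg (by omega)]
      ring
    · intro hnm
      exact absurd (Finset.mem_range.mpr (by omega)) hnm

lemma F_norm_aux (n : ℕ) (hn1 : 1 ≤ n) (hodd : n % 2 = 1) (θ α : ℕ → ℝ) (m : ℕ)
    (hm : m ≤ (n-1)/2) :
    (starRingEnd ℂ) (Fc n θ α m) * Fc n θ α m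
      + (starRingEnd ℂ) (Fc n θ α (n-m)) * Fc n θ α (n-m) = 1 := by
  rw [Fc, Fc, if_pos hm, if_neg (by omega), show n - (n - m) = m by omega]
  have hE := conj_exp_mul (α m)
  have hcs : (Real.cos (θ m):ℂ)^2 + (Real.sin (θ m):ℂ)^2 = 1 := by
    exact_mod_cast congrArg (Complex.ofReal)
      (by nlinarith [Real.sin_sq_add_cos_sq (θ m)] :
        Real.cos (θ m)^2 + Real.sin (θ m)^2 = 1)
  have hI : Complex.I * Complex.I = -1 := Complex.I_mul_I
  simp only [_root_.map_mul, Complex.conj_ofReal, Complex.conj_I]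
  linear_combination ((Real.cos (θ m):ℂ)^2 - (Real.sin (θ m):ℂ)^2 * (Complex.I * Complex.I)) * hE
    - (Real.sin (θ m):ℂ)^2 * hI + hcs

lemma F_norm (n : ℕ) (hn1 : 1 ≤ n) (hodd : n % 2 = 1) (θ α : ℕ → ℝ) (m : ℕ) (hm : m ≤ n) :
    (starRingEnd ℂ) (Fc n θ α m) * Fc n θ α m
      + (starRingEnd ℂ) (Fc n θ α (n-m)) * Fc n θ α (n-m) = 1 := by
  by_cases hc : m ≤ (n-1)/2
  · exact F_norm_aux n hn1 hodd θ α m hc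
  · have h2 := F_norm_aux n hn1 hodd θ α (n-m) (by omega)
    rw [show n - (n - m) = m by omega] at h2
    linear_combination h2

lemma F_cross (n : ℕ) (hn1 : 1 ≤ n) (hodd : n % 2 = 1) (θ α : ℕ → ℝ) (m : ℕ) (hm : m ≤ n) :
    (starRingEnd ℂ) (Fc n θ α m) * Fc n θ α (n-m)
      + (starRingEnd ℂ) (Fc n θ α (n-m)) * Fc n θ α m = 0 := by
  have aux : ∀ m', m' ≤ (n-1)/2 →
      (starRingEnd ℂ) (Fc n θ α m') * Fc n θ α (n-m')
        + (starRingEnd ℂ) (Fc n θ α (n-m')) * Fc n θ α m' = 0 := by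
    intro m' hm'
    rw [Fc, Fc, if_pos hm', if_neg (by omega), show n - (n - m') = m' by omega]
    simp only [_root_.map_mul, Complex.conj_ofReal, Complex.conj_I]
    ring
  by_cases hc : m ≤ (n-1)/2
  · exact aux m hc
  · have h2 := aux (n-m) (by omega)
    rw [show n - (n - m) = m by omega] at h2
    linear_combination h2

lemma c0_facts (n : ℕ) :
    (starRingEnd ℂ) (((Real.sqrt 2 : ℂ) ^ (n - 1))⁻¹) = ((Real.sqrt 2 : ℂ) ^ (n - 1))⁻¹ ∧
    (2:ℂ)^(n-1) * ((((Real.sqrt 2 : ℂ) ^ (n - 1))⁻¹) * (((Real.sqrt 2 : ℂ) ^ (n - 1))⁻¹)) = 1 := by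
  constructor
  · rw [map_inv₀, map_pow, Complex.conj_ofReal]
  · rw [← mul_inv, ← mul_pow]
    have h2 : (Real.sqrt 2 : ℂ) * (Real.sqrt 2 : ℂ) = 2 := by
      rw [← Complex.ofReal_mul, Real.mul_self_sqrt (by norm_num)]
      norm_num
    rw [h2, mul_inv_cancel₀ (pow_ne_zero _ two_ne_zero)]

lemma ortho (n : ℕ) [NeZero n] (hn : 1 ≤ n) (hodd : n % 2 = 1) (θ α : ℕ → ℝ)
    (ψ : (Fin n → Fin 2) → ℂ)
    (hψ : ∀ w, ψ w = ((Real.sqrt 2 : ℂ) ^ (n - 1))⁻¹ * Fc n θ α (wt w))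
    (g h : Fin n → Fin 2) :
    dotc (Ug2 n g *ᵥ ψ) (Ug2 n h *ᵥ ψ) = if g = h then 1 else 0 := by
  classical
  set c0 : ℂ := ((Real.sqrt 2 : ℂ) ^ (n - 1))⁻¹ with hc0
  obtain ⟨hconj, hc2⟩ := c0_facts n
  set pN : Fin n := ⟨n - 1, by have := Nat.pos_of_ne_zero (NeZero.ne n); omega⟩ with hpN
  -- rewrite dotc as a sum of character times amplitude product
  have hQ : ∀ (a : Fin 2) (v : Fin n → Fin 2),
      (if a = 0 then ψ v else ψ (flipv v)) = c0 * Fc n θ α (if a = 0 then wt v else n - wt v) := by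
    intro a v
    by_cases ha : a = 0 <;> simp [ha, hψ, wt_flipv]
  have hmain : dotc (Ug2 n g *ᵥ ψ) (Ug2 n h *ᵥ ψ)
      = ∑ v, (Esgn n g v * Esgn n h v) *
          ((starRingEnd ℂ) (c0 * Fc n θ α (if g pN = 0 then wt v else n - wt v)) *
           (c0 * Fc n θ α (if h pN = 0 then wt v else n - wt v))) := by
    rw [dotc]
    simp only [Ug2_mulVec]
    refine Finset.sum_congr rfl fun v _ => ?_
    rw [hQ (g pN) v, hQ (h pN) v, _root_.map_mul, Esgn_conj]
    ring
  -- doubling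
  set T : (Fin n → Fin 2) → ℂ := fun v => (Esgn n g v * Esgn n h v) *
          ((starRingEnd ℂ) (c0 * Fc n θ α (if g pN = 0 then wt v else n - wt v)) *
           (c0 * Fc n θ α (if h pN = 0 then wt v else n - wt v))) with hT
  have hdouble : 2 * dotc (Ug2 n g *ᵥ ψ) (Ug2 n h *ᵥ ψ) = ∑ v, (T v + T (flipv v)) := by
    rw [hmain]; exact sum_double T
  by_cases hx : g pN = h pN
  · -- same x part
    have hsum : ∀ v : Fin n → Fin 2, T v + T (flipv v)
        = (Esgn n g v * Esgn n h v) * (c0 * c0) := by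
      intro v
      have hm := wt_le v
      have hwf : wt (flipv v) = n - wt v := wt_flipv v
      have hnm : n - (n - wt v) = wt v := by omega
      rw [hT]
      simp only [Esgn_flipv, hwf, hx]
      rw [_root_.map_mul, _root_.map_mul, hconj]
      by_cases hh0 : h pN = 0
      · simp only [if_pos hh0]
        have := F_norm n hn hodd θ α (wt v) hm
        linear_combination (Esgn n g v * Esgn n h v) * (c0 * c0) * this
      · simp only [if_neg hh0, hnm]
        have := F_norm n hn hodd θ α (n - wt v) (by omega)
        rw [hnm] at this
        linear_combination (Esgn n g v * Esgn n h v) * (c0 * c0) * this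
    rw [Finset.sum_congr rfl (fun v _ => hsum v)] at hdouble
    by_cases hgh : g = h
    · subst hgh
      rw [if_pos rfl]
      have h1 : ∀ v : Fin n → Fin 2, Esgn n g v * Esgn n g v * (c0 * c0) = c0 * c0 := by
        intro v; rw [Esgn_mul_self, one_mul]
      rw [Finset.sum_congr rfl (fun v _ => h1 v), Finset.sum_const, Finset.card_univ] at hdouble
      have hcard : Fintype.card (Fin n → Fin 2) = 2^n := by
        simp [Fintype.card_fun]
      rw [hcard] at hdouble
      have h2n : (2:ℂ)^n = 2 * 2^(n-1) := by
        rw [← pow_succ']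
        congr 1
        omega
      have : (2:ℂ) * dotc (Ug2 n g *ᵥ ψ) (Ug2 n g *ᵥ ψ) = 2 := by
        rw [hdouble, nsmul_eq_mul]
        push_cast
        rw [h2n]
        linear_combination 2 * hc2
      linear_combination this / 2
    · rw [if_neg hgh]
      -- z parts differ
      have hz : ∃ i : Fin (n-1), g (lo i) ≠ h (lo i) := by
        by_contra hcon
        push_neg at hcon
        apply hgh
        funext q
        by_cases hq : q.val < n - 1
        · have : q = lo ⟨q.val, hq⟩ := Fin.ext rfl
          rw [this]
          exact hcon ⟨q.val, hq⟩
        · have hq1 : q = pN := Fin.ext (by have := q.isLt; simp [hpN]; omega)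
          rw [hq1]; exact hx
      have hzero : ∑ v : Fin n → Fin 2, Esgn n g v * Esgn n h v = 0 := chi_sum_zero g h hz
      have : ∑ v : Fin n → Fin 2, Esgn n g v * Esgn n h v * (c0 * c0) = 0 := by
        rw [← Finset.sum_mul, hzero, zero_mul]
      rw [this] at hdouble
      linear_combination hdouble / 2
  · -- different x part: g ≠ h and cross terms cancel
    have hgh : g ≠ h := fun hc => hx (by rw [hc])
    rw [if_neg hgh]
    have hsum : ∀ v : Fin n → Fin 2, T v + T (flipv v) = 0 := by
      intro v
      have hm := wt_le v
      have hwf : wt (flipv v) = n - wt v := wt_flipv v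
      have hnm : n - (n - wt v) = wt v := by omega
      have hcross := F_cross n hn hodd θ α (wt v) hm
      rw [hT]
      simp only [Esgn_flipv, hwf]
      rw [_root_.map_mul, _root_.map_mul, hconj]
      by_cases hg0 : g pN = 0
      · have hh0 : ¬ (h pN = 0) := fun hc => hx (by rw [hg0, hc])
        simp only [if_pos hg0, if_neg hh0, hnm]
        linear_combination (Esgn n g v * Esgn n h v) * (c0 * c0) * hcross
      · have hh0 : h pN = 0 := by
          have := (h pN).isLt
          have := (g pN).isLt
          by_contra hc
          apply hx
          apply Fin.ext
          have h1 : (g pN).val ≠ 0 := fun hcc => hg0 (Fin.ext hcc)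
          have h2 : (h pN).val ≠ 0 := fun hcc => hc (Fin.ext hcc)
          omega
        simp only [if_neg hg0, if_pos hh0, hnm]
        linear_combination (Esgn n g v * Esgn n h v) * (c0 * c0) * hcross
    rw [Finset.sum_congr rfl (fun v _ => hsum v), Finset.sum_const_zero] at hdouble
    linear_combination hdouble / 2
/-!
STATEMENT 12: For odd n, the PPI state
ψ = 2^{−(n−1)/2} Σ_{k=0}^{(n−1)/2} e^{iα_k}(cos θ_k·D_k + i·sin θ_k·D_{n−k})
is a unit vector, invariant under all permutations of the tensor factors, and its
orbit under G_tetra^{(n)} is an orthonormal basis of (ℂ²)^{⊗n}.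
-/
theorem stmt12 (n : ℕ) [NeZero n] (hn : 1 ≤ n) (hodd : Odd n) (θ α : ℕ → ℝ) :
    let ψ : (Fin n → Fin 2) → ℂ := fun w =>
      ((Real.sqrt 2 : ℂ) ^ (n - 1))⁻¹ * ∑ k ∈ Finset.range ((n - 1) / 2 + 1),
        Complex.exp ((α k : ℝ) * Complex.I) *
          ((Real.cos (θ k) : ℂ) * Dicke n k w +
            Complex.I * (Real.sin (θ k) : ℂ) * Dicke n (n - k) w)
    (dotc ψ ψ = 1) ∧
    (∀ (σ : Equiv.Perm (Fin n)) (w : Fin n → Fin 2), ψ (w ∘ σ) = ψ w) ∧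
    (∀ g h : Fin n → Fin 2,
      dotc (Ug2 n g *ᵥ ψ) (Ug2 n h *ᵥ ψ) = if g = h then 1 else 0) ∧
    Submodule.span ℂ (Set.range fun g : Fin n → Fin 2 => Ug2 n g *ᵥ ψ) = ⊤ := by
  intro ψ
  have hodd' : n % 2 = 1 := Nat.odd_iff.mp hodd
  have hψ : ∀ w, ψ w = ((Real.sqrt 2 : ℂ) ^ (n - 1))⁻¹ * Fc n θ α (wt w) :=
    fun w => congrArg (fun t => ((Real.sqrt 2 : ℂ) ^ (n - 1))⁻¹ * t)
      (keyF n hn hodd' θ α (wt w) (wt_le w))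
  have hortho : ∀ g h : Fin n → Fin 2,
      dotc (Ug2 n g *ᵥ ψ) (Ug2 n h *ᵥ ψ) = if g = h then 1 else 0 :=
    fun g h => ortho n hn hodd' θ α ψ hψ g h
  have hU0 : Ug2 n (fun _ => 0) *ᵥ ψ = ψ := by
    rw [Ug2_mulVec]
    funext v
    rw [if_pos rfl]
    have h1 : Esgn n (fun _ => 0) v = 1 := by
      rw [Esgn_eq]
      apply Finset.prod_eq_one
      intro i _
      norm_num
    rw [h1, one_mul]
  refine ⟨?_, ?_, hortho, ?_⟩
  · have h1 := hortho (fun _ => 0) (fun _ => 0)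
    rw [hU0, if_pos rfl] at h1
    exact h1
  · intro σ w
    rw [hψ, hψ, show wt (w ∘ σ) = wt w from wt_comp_perm w σ]
  · -- span
    set b : (Fin n → Fin 2) → ((Fin n → Fin 2) → ℂ) := fun g => Ug2 n g *ᵥ ψ with hb
    have hlin : LinearIndependent ℂ b := by
      rw [Fintype.linearIndependent_iff]
      intro cc hcc g0
      have h1 : dotc (b g0) (∑ g, cc g • b g) = cc g0 := by
        calc dotc (b g0) (∑ g, cc g • b g)
            = ∑ v, (starRingEnd ℂ) (b g0 v) * (∑ g, cc g * b g v) := by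
              rw [dotc]
              refine Finset.sum_congr rfl fun v _ => ?_
              congr 1
              simp [Finset.sum_apply]
          _ = ∑ g, cc g * ∑ v, (starRingEnd ℂ) (b g0 v) * b g v := by
              simp only [Finset.mul_sum]
              rw [Finset.sum_comm]
              refine Finset.sum_congr rfl fun g _ => ?_
              exact Finset.sum_congr rfl fun v _ => by ring
          _ = ∑ g, cc g * (if g0 = g then 1 else 0) := by
              refine Finset.sum_congr rfl fun g _ => ?_
              rw [show (∑ v, (starRingEnd ℂ) (b g0 v) * b g v) = dotc (b g0) (b g) from rfl,
                hortho g0 g]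
          _ = cc g0 := by simp
      rw [hcc] at h1
      rw [← h1, dotc]
      simp
    have hcard : Fintype.card (Fin n → Fin 2)
        = Module.finrank ℂ ((Fin n → Fin 2) → ℂ) := by
      rw [Module.finrank_fintype_fun_eq_card]
    exact hlin.span_eq_top_of_card_eq_finrank hcard
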